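/- arXiv:1111.4013 — 2 statements merged into one kernel-verified Lean document; each statement's English description precedes it below -/
import Mathlib

section
/- Let (X,d) be a metric space, p ∈ X, r > 0 such that the closed ball B(p,2r) is compact, and let f : B(p,2r) → ℝ be continuous, bounded, nonnegative with f(p) > 0. Then there exists q ∈ B(p,2r) such that f(q) ≥ f(p), and setting α = f(p)/f(q), one has d(p,q) ≤ 2r(1-α) and f(q') < 2 f(q) for all q' ∈ B(q, α r). -/
/-!
Argue by contradiction. If every admissible point `q` (one with `f p ≤ f q` and
`dist p q ≤ 2r(1 - f p / f q)`) has a point within `(f p / f q) r` of it where `f` is at least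
doubled, then that point is admissible again: the distance budget `2r(1 - f p / f q)` grows by at
least `(f p / f q) r` when `f q` doubles. Starting from `q = p` this produces admissible points
with `f ≥ 2ⁿ f p` for every `n`, contradicting the boundedness of `f`.
-/

open Metric Set

theorem dist_le_two_mul_one_sub_div_of_two_mul_le {X : Type*} [PseudoMetricSpace X]
    {p q q' : X} {a b c r : ℝ} (ha : 0 < a) (hab : a ≤ b) (hbc : 2 * b ≤ c)
    (hpq : dist p q ≤ 2 * r * (1 - a / b)) (hqq' : dist q q' < a / b * r) :
    dist p q' ≤ 2 * r * (1 - a / c) := by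
  have hb : 0 < b := ha.trans_le hab
  have hr : 0 < r := pos_of_mul_pos_right (dist_nonneg.trans_lt hqq') (div_pos ha hb).le
  have hac : a / c ≤ a / b / 2 := by
    rw [div_div]
    exact div_le_div_of_nonneg_left ha.le (by positivity) (by linarith)
  calc dist p q' ≤ dist p q + dist q q' := dist_triangle p q q'
    _ ≤ 2 * r * (1 - a / b / 2) := by linarith
    _ ≤ 2 * r * (1 - a / c) := by gcongr

theorem exists_two_pow_mul_le_of_forall_exists_two_mul_le {X : Type*} [PseudoMetricSpace X]
    {p : X} {r : ℝ} (hr : 0 < r) {f : X → ℝ} (hfp : 0 < f p)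
    (hdouble : ∀ q ∈ ball p (2 * r), f p ≤ f q → dist p q ≤ 2 * r * (1 - f p / f q) →
      ∃ q' ∈ ball q (f p / f q * r), 2 * f q ≤ f q') (n : ℕ) :
    ∃ q ∈ ball p (2 * r), 2 ^ n * f p ≤ f q ∧ dist p q ≤ 2 * r * (1 - f p / f q) := by
  induction n with
  | zero => exact ⟨p, mem_ball_self (by positivity), by simp, by simp [div_self hfp.ne']⟩
  | succ n ih =>
    obtain ⟨q, hq, hfq, hpq⟩ := ih
    have hfpq : f p ≤ f q :=
      (le_mul_of_one_le_left hfp.le (one_le_pow₀ one_le_two)).trans hfq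
    obtain ⟨q', hqq', hfq'⟩ := hdouble q hq hfpq hpq
    have hpq' := dist_le_two_mul_one_sub_div_of_two_mul_le hfp hfpq hfq' hpq
      (mem_ball'.1 hqq')
    have hfq'_pos : 0 < f q' := by linarith
    refine ⟨q', mem_ball'.2 (hpq'.trans_lt ?_), by rw [pow_succ]; linarith, hpq'⟩
    nlinarith [div_pos hfp hfq'_pos]

theorem point_picking_general {X : Type*} [MetricSpace X] (p : X) (r : ℝ) (hr : 0 < r)
    (f : X → ℝ)
    (hbd : ∃ M : ℝ, ∀ x ∈ ball p (2 * r), f x ≤ M)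
    (hfp : 0 < f p) :
    ∃ q ∈ ball p (2 * r),
      f p ≤ f q ∧
      dist p q ≤ 2 * r * (1 - f p / f q) ∧
      ∀ q' ∈ ball q ((f p / f q) * r), f q' < 2 * f q := by
  by_contra! hdouble
  obtain ⟨M, hM⟩ := hbd
  obtain ⟨n, hn⟩ := pow_unbounded_of_one_lt (M / f p) one_lt_two
  obtain ⟨q, hq, hfq, -⟩ := exists_two_pow_mul_le_of_forall_exists_two_mul_le hr hfp hdouble n
  have : M < 2 ^ n * f p := (div_lt_iff₀ hfp).1 hn
  linarith [hM q hq]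

/-- Perelman's point-picking lemma. -/
theorem point_picking {X : Type*} [MetricSpace X] (p : X) (r : ℝ) (hr : 0 < r)
    (hcompact : IsCompact (closedBall p (2 * r)))
    (f : X → ℝ) (hcont : ContinuousOn f (ball p (2 * r)))
    (hbd : ∃ M : ℝ, ∀ x ∈ ball p (2 * r), f x ≤ M)
    (hnonneg : ∀ x ∈ ball p (2 * r), 0 ≤ f x)
    (hfp : 0 < f p) :
    ∃ q ∈ ball p (2 * r),
      f p ≤ f q ∧
      dist p q ≤ 2 * r * (1 - f p / f q) ∧
      ∀ q' ∈ ball q ((f p / f q) * r), f q' < 2 * f q :=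
  point_picking_general p r hr f hbd hfp
end

section
/- Let τ > 0, n ≥ 1, and μ a Borel measure on a metric space (X,d) with base point p such that V(τ) = ∫_X (4πτ)^{-n/2} e^{-d(p,x)²/(4τ)} dμ(x) = 1 and such that μ(B(p,r)) ≤ ω_n rⁿ for all r > 0 with equality in the limit r → 0 (i.e., μ(B(p,r))/ (ω_n rⁿ) → 1 as r → 0). If moreover r ↦ μ(B(p,r))/(ω_n rⁿ) is non-increasing, then μ(B(p,r)) = ω_n rⁿ for all r > 0. -/
open Real MeasureTheory Metric Filter Set
open scoped ENNReal

/-!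
By the layer-cake formula, the Gaussian-weighted mass `∫ c e^{-d(p,x)²/4τ} dμ` is the integral
over `t > 0` of `μ (B(p, s t))`, where `B(p, s t)` is the superlevel set `{t < c e^{-d(p,·)²/4τ}}`.
The same holds for Lebesgue measure on `ℝⁿ`, where with `c = (4πτ)^{-n/2}` the integral is `1`.
Since `μ (B(p, r)) ≤ ω rⁿ = |B(0, r)|` for every `r`, equality of the two integrals forces
`μ (B(p, s)) = ω sⁿ` for almost every, hence for arbitrarily large, radii `s`. Monotonicity of
the volume ratio then propagates the equality down to every radius.
-/

/-- The radius `s` with `{y ≥ 0 | t < c e^{-y²/4τ}} = [0, s)`. -/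
noncomputable def gaussianLevelRadius (c τ t : ℝ) : ℝ := √(4 * τ * log (c / t))

section GaussianLevelRadius

variable {c τ : ℝ}

theorem lt_mul_exp_iff_lt_gaussianLevelRadius (hτ : 0 < τ) (hc : 0 < c) {t y : ℝ}
    (ht : 0 < t) (hy : 0 ≤ y) :
    t < c * exp (-y ^ 2 / (4 * τ)) ↔ y < gaussianLevelRadius c τ t := by
  rw [gaussianLevelRadius, lt_sqrt hy, mul_comm c, ← div_lt_iff₀ hc,
    ← log_lt_iff_lt_exp (div_pos ht hc), ← neg_neg (log (t / c)), ← log_inv, inv_div,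
    neg_div, neg_lt_neg_iff, div_lt_iff₀ (by positivity), mul_comm]

theorem gaussianLevelRadius_antitoneOn (hτ : 0 < τ) (hc : 0 < c) :
    AntitoneOn (gaussianLevelRadius c τ) (Ioi 0) := by
  intro t ht u hu htu
  unfold gaussianLevelRadius
  gcongr
  exact div_pos hc hu

theorem exists_lt_gaussianLevelRadius_of_ae (hτ : 0 < τ) (hc : 0 < c) {P : ℝ → Prop}
    (hP : ∀ᵐ t ∂volume.restrict (Ioi 0), P (gaussianLevelRadius c τ t)) {r : ℝ} (hr : 0 ≤ r) :
    ∃ ρ, r < ρ ∧ P ρ := by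
  set t₀ := c * exp (-r ^ 2 / (4 * τ))
  have : (ae (volume.restrict (Ioo 0 t₀))).NeBot := by
    rw [ae_neBot, Ne, Measure.restrict_eq_zero, Real.volume_Ioo, ENNReal.ofReal_eq_zero, not_le,
      sub_zero]
    positivity
  obtain ⟨t, ht, hPt⟩ := ((ae_restrict_mem (s := Ioo 0 t₀) measurableSet_Ioo).and
    (ae_restrict_of_ae_restrict_of_subset Ioo_subset_Ioi_self hP)).exists
  exact ⟨_, (lt_mul_exp_iff_lt_gaussianLevelRadius hτ hc ht.1 hr).1 ht.2, hPt⟩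

end GaussianLevelRadius

section LayerCake

variable {X Y : Type*} [PseudoMetricSpace X] [MeasurableSpace X] [OpensMeasurableSpace X]
  [PseudoMetricSpace Y] [MeasurableSpace Y] [OpensMeasurableSpace Y] {c τ : ℝ}

theorem lintegral_gaussian_dist_eq_lintegral_measure_ball (μ : Measure X) (p : X) (hτ : 0 < τ)
    (hc : 0 < c) :
    ∫⁻ x, ENNReal.ofReal (c * exp (-dist p x ^ 2 / (4 * τ))) ∂μ =
      ∫⁻ t in Ioi 0, μ (ball p (gaussianLevelRadius c τ t)) := by
  rw [lintegral_eq_lintegral_meas_lt μ (Eventually.of_forall fun x => by positivity)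
    (by fun_prop)]
  refine setLIntegral_congr_fun measurableSet_Ioi fun t ht => congrArg μ ?_
  ext x
  rw [mem_ball, dist_comm x p]
  exact lt_mul_exp_iff_lt_gaussianLevelRadius hτ hc ht dist_nonneg

theorem ae_measure_ball_eq_of_lintegral_gaussian_le (μ : Measure X) (ν : Measure Y) (p : X) (q : Y)
    (hτ : 0 < τ) (hc : 0 < c) (hle : ∀ r > 0, μ (ball p r) ≤ ν (ball q r))
    (hint : ∫⁻ y, ENNReal.ofReal (c * exp (-dist q y ^ 2 / (4 * τ))) ∂ν ≤
      ∫⁻ x, ENNReal.ofReal (c * exp (-dist p x ^ 2 / (4 * τ))) ∂μ)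
    (hfin : ∫⁻ x, ENNReal.ofReal (c * exp (-dist p x ^ 2 / (4 * τ))) ∂μ ≠ ∞) :
    ∀ᵐ t ∂volume.restrict (Ioi 0),
      μ (ball p (gaussianLevelRadius c τ t)) = ν (ball q (gaussianLevelRadius c τ t)) := by
  rw [lintegral_gaussian_dist_eq_lintegral_measure_ball μ p hτ hc] at hint hfin
  rw [lintegral_gaussian_dist_eq_lintegral_measure_ball ν q hτ hc] at hint
  refine ae_eq_of_ae_le_of_lintegral_le (Eventually.of_forall fun t => ?_) hfin
    (aemeasurable_restrict_of_antitoneOn measurableSet_Ioi ?_) hint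
  · obtain h | h := (show 0 ≤ gaussianLevelRadius c τ t from sqrt_nonneg _).eq_or_lt
    · simp only [← h, ball_zero, measure_empty, le_refl]
    · exact hle _ h
  · exact fun t ht u hu htu => measure_mono (ball_subset_ball
      (gaussianLevelRadius_antitoneOn hτ hc ht hu htu))

end LayerCake

theorem MeasureTheory.lintegral_ofReal_eq_one_of_integral_eq_one {α : Type*} [MeasurableSpace α]
    {μ : Measure α} {f : α → ℝ} (hf : 0 ≤ᵐ[μ] f) (h : ∫ x, f x ∂μ = 1) :
    ∫⁻ x, ENNReal.ofReal (f x) ∂μ = 1 := by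
  rw [← ofReal_integral_eq_lintegral_ofReal (.of_integral_ne_zero (h ▸ one_ne_zero)) hf, h,
    ENNReal.ofReal_one]

section Euclidean

variable {V : Type*} [NormedAddCommGroup V] [InnerProductSpace ℝ V] [FiniteDimensional ℝ V]
  [MeasurableSpace V] [BorelSpace V]

theorem integral_gaussian_norm_eq_one {τ : ℝ} (hτ : 0 < τ) :
    ∫ v : V, (4 * π * τ) ^ (-(Module.finrank ℝ V : ℝ) / 2) * exp (-‖v‖ ^ 2 / (4 * τ)) = 1 := by
  have h : ∀ v : V, -‖v‖ ^ 2 / (4 * τ) = -(4 * τ)⁻¹ * ‖v‖ ^ 2 := fun v => by ring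
  simp_rw [h]
  rw [integral_const_mul, GaussianFourier.integral_rexp_neg_mul_sq_norm (by positivity),
    show π / (4 * τ)⁻¹ = 4 * π * τ by field_simp, ← rpow_add (by positivity), neg_div,
    neg_add_cancel, rpow_zero]

theorem volume_ball_eq_ofReal (x : V) {r : ℝ} (hr : 0 < r) :
    volume (ball x r) =
      ENNReal.ofReal ((volume (ball (0 : V) 1)).toReal * r ^ Module.finrank ℝ V) := by
  rw [Measure.addHaar_ball_of_pos _ _ hr, ENNReal.ofReal_mul ENNReal.toReal_nonneg,
    ENNReal.ofReal_toReal measure_ball_lt_top.ne, mul_comm]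

end Euclidean

theorem reduced_volume_one_rigidity_general {X : Type*} [MetricSpace X] [MeasurableSpace X]
    [BorelSpace X] (μ : Measure X) (p : X) (n : ℕ) (τ : ℝ) (hτ : 0 < τ)
    (ω : ℝ) (hω : ω = (volume (ball (0 : EuclideanSpace ℝ (Fin n)) 1)).toReal)
    (hV : ∫ x, (4 * π * τ) ^ (-(n : ℝ) / 2) * Real.exp (-dist p x ^ 2 / (4 * τ)) ∂μ = 1)
    (hvol : ∀ r > (0 : ℝ), μ (ball p r) ≤ ENNReal.ofReal (ω * r ^ n))
    (hratio_mono : ∀ r s : ℝ, 0 < r → r ≤ s →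
      (μ (ball p s)).toReal / (ω * s ^ n) ≤ (μ (ball p r)).toReal / (ω * r ^ n)) :
    ∀ r > (0 : ℝ), μ (ball p r) = ENNReal.ofReal (ω * r ^ n) := by
  intro r hr
  set c := (4 * π * τ) ^ (-(n : ℝ) / 2)
  have hc : 0 < c := by positivity
  have hμ : ∫⁻ x, ENNReal.ofReal (c * exp (-dist p x ^ 2 / (4 * τ))) ∂μ = 1 :=
    lintegral_ofReal_eq_one_of_integral_eq_one (.of_forall fun _ => by positivity) hV
  have hE : ∫⁻ v : EuclideanSpace ℝ (Fin n),
      ENNReal.ofReal (c * exp (-dist 0 v ^ 2 / (4 * τ))) = 1 := by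
    refine lintegral_ofReal_eq_one_of_integral_eq_one (.of_forall fun _ => by positivity) ?_
    simpa [finrank_euclideanSpace_fin] using integral_gaussian_norm_eq_one
      (V := EuclideanSpace ℝ (Fin n)) hτ
  have hball (s : ℝ) (hs : 0 < s) :
      volume (ball (0 : EuclideanSpace ℝ (Fin n)) s) = ENNReal.ofReal (ω * s ^ n) := by
    rw [volume_ball_eq_ofReal _ hs, finrank_euclideanSpace_fin, hω]
  have hae := ae_measure_ball_eq_of_lintegral_gaussian_le μ volume p 0 hτ hc
    (fun s hs => (hvol s hs).trans_eq (hball s hs).symm) (hμ.trans hE.symm).ge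
    (hμ ▸ ENNReal.one_ne_top)
  obtain ⟨ρ, hrρ, hρ⟩ := exists_lt_gaussianLevelRadius_of_ae hτ hc
    (P := fun ρ => μ (ball p ρ) = volume (ball 0 ρ)) hae hr.le
  have hρpos : 0 < ρ := hr.trans hrρ
  rw [hball ρ hρpos] at hρ
  have hωpos : 0 < ω :=
    hω ▸ ENNReal.toReal_pos (measure_ball_pos _ _ one_pos).ne' measure_ball_lt_top.ne
  have hratio := hratio_mono r ρ hr hrρ.le
  rw [hρ, ENNReal.toReal_ofReal (by positivity), div_self (by positivity),
    one_le_div (by positivity)] at hratio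
  exact le_antisymm (hvol r hr)
    ((ENNReal.ofReal_le_iff_le_toReal ((hvol r hr).trans_lt ENNReal.ofReal_lt_top).ne).2 hratio)

/-- Measure-theoretic rigidity: reduced volume equal to 1 together with the
Bishop–Gromov monotone volume ratio with limit 1 at 0 forces the volume ratio
to be identically 1. -/
theorem reduced_volume_one_rigidity {X : Type*} [MetricSpace X] [MeasurableSpace X]
    [BorelSpace X] (μ : Measure X) (p : X) (n : ℕ) (hn : 1 ≤ n) (τ : ℝ) (hτ : 0 < τ)
    (ω : ℝ) (hω : ω = (volume (ball (0 : EuclideanSpace ℝ (Fin n)) 1)).toReal)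
    (hV : ∫ x, (4 * π * τ) ^ (-(n : ℝ) / 2) * Real.exp (-dist p x ^ 2 / (4 * τ)) ∂μ = 1)
    (hvol : ∀ r > (0 : ℝ), μ (ball p r) ≤ ENNReal.ofReal (ω * r ^ n))
    (hratio_lim : Tendsto (fun r : ℝ => (μ (ball p r)).toReal / (ω * r ^ n))
      (nhdsWithin 0 (Ioi 0)) (nhds 1))
    (hratio_mono : ∀ r s : ℝ, 0 < r → r ≤ s →
      (μ (ball p s)).toReal / (ω * s ^ n) ≤ (μ (ball p r)).toReal / (ω * r ^ n)) :
    ∀ r > (0 : ℝ), μ (ball p r) = ENNReal.ofReal (ω * r ^ n) :=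
  reduced_volume_one_rigidity_general μ p n τ hτ ω hω hV hvol hratio_mono
end
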